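/- Suppose t is a vertex of H(d̄) for a horoball H of the Groves–Manning space X with d̄ ≥ δ, z is a closest point of H(d̄) to *, and t ∈ B_r(*). Then d(z,t) ≤ 2δ + 1 + (r − d(*,z)); that is, B_r(*) ∩ H(d̄) ⊆ B_{2δ+1+k}(z) ∩ H(d̄) where k = r − d(*,z). -/

import Mathlib

/-! Core definitions: Cayley graphs, combinatorial horoballs, and the
Groves–Manning space of a relatively hyperbolic pair, as a locally finite graph. -/

open SimpleGraph

namespace GM

variable {G : Type} [Group G] {ι : Type}

/-- Adjacency in the Cayley graph of `G` with respect to the symmetrized set `S`. -/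
def cayleyAdj (S : Set G) (a b : G) : Prop :=
  a ≠ b ∧ (a⁻¹ * b ∈ S ∨ b⁻¹ * a ∈ S)

/-- The Cayley graph of `G` with respect to `S`. -/
def cayleyGraph (S : Set G) : SimpleGraph G where
  Adj := cayleyAdj S
  symm := by constructor; rintro a b ⟨h1, h2⟩; exact ⟨h1.symm, h2.symm⟩
  loopless := ⟨fun a h => h.1 rfl⟩

/-- The full subgraph of the Cayley graph on the left cosets of `P i`
(the union over all cosets; distinct cosets lie in distinct components). -/
def cosetGraph (S : Set G) (P : ι → Subgroup G) (i : ι) : SimpleGraph G where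
  Adj a b := cayleyAdj S a b ∧ a⁻¹ * b ∈ P i
  symm := by
    constructor
    rintro a b ⟨⟨h0, h1⟩, h2⟩
    refine ⟨⟨h0.symm, h1.symm⟩, ?_⟩
    have := (P i).inv_mem h2
    simpa [mul_inv_rev] using this
  loopless := ⟨fun a h => h.1.1 rfl⟩

/-- Vertices of the Groves–Manning space: the group `G` (depth 0), together with,
for each `i : ι` and `g : G`, a vertex `(g, k)` at depth `k ≥ 1` in the combinatorial
horoball over the coset `g • (P i)`. -/
def GMVert (G ι : Type) : Type := G ⊕ (ι × G × ℕ+)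

/-- The depth function `𝒟` on vertices. -/
def depth : GMVert G ι → ℕ
  | .inl _ => 0
  | .inr (_, _, k) => (k : ℕ)

/-- The underlying group element ("base") of a vertex. -/
def baseElt : GMVert G ι → G
  | .inl g => g
  | .inr (_, g, _) => g

/-- The vertex over `g` at depth `l` in the horoballs for the subgroup `P i`. -/
def atLevel (i : ι) (g : G) : ℕ → GMVert G ι
  | 0 => .inl g
  | (l + 1) => .inr (i, g, ⟨l + 1, Nat.succ_pos l⟩)

/-- Horizontal adjacency at depth `k ≥ 1` inside a horoball: two distinct elements of a
common left coset of `P i` whose distance in the coset graph is at most `2 ^ k`. -/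
def horizAdjPos (S : Set G) (P : ι → Subgroup G) (i : ι) (k : ℕ) (a b : G) : Prop :=
  a ≠ b ∧ a⁻¹ * b ∈ P i ∧ (cosetGraph S P i).Reachable a b ∧ (cosetGraph S P i).dist a b ≤ 2 ^ k

/-- Horizontal adjacency at depth `l` (at depth `0` this is an edge of the coset graph). -/
def hAdjL (S : Set G) (P : ι → Subgroup G) (i : ι) (l : ℕ) (a b : G) : Prop :=
  match l with
  | 0 => (cosetGraph S P i).Adj a b
  | (m + 1) => horizAdjPos S P i (m + 1) a b

/-- Adjacency in the Groves–Manning space: Cayley edges at depth 0, vertical edges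
joining `(g, k)` to `(g, k+1)`, and horizontal horoball edges. -/
def gmAdj (S : Set G) (P : ι → Subgroup G) : GMVert G ι → GMVert G ι → Prop
  | .inl a, .inl b => cayleyAdj S a b
  | .inl a, .inr (_, b, k) => a = b ∧ (k : ℕ) = 1
  | .inr (_, a, k), .inl b => a = b ∧ (k : ℕ) = 1
  | .inr (i, a, k), .inr (j, b, l) =>
      i = j ∧ ((a = b ∧ ((l : ℕ) = (k : ℕ) + 1 ∨ (k : ℕ) = (l : ℕ) + 1)) ∨
        ((k : ℕ) = (l : ℕ) ∧ horizAdjPos S P i (k : ℕ) a b))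

/-- The (1-skeleton of the) Groves–Manning space of `(G, {P i}, S)`. -/
def GMGraph (S : Set G) (P : ι → Subgroup G) : SimpleGraph (GMVert G ι) where
  Adj := gmAdj S P
  symm := by
    constructor
    rintro (a | ⟨i, a, k⟩) (b | ⟨j, b, l⟩) h
    · exact ⟨h.1.symm, h.2.symm⟩
    · exact ⟨h.1.symm, h.2⟩
    · exact ⟨h.1.symm, h.2⟩
    · obtain ⟨rfl, (⟨rfl, hv⟩ | ⟨hk, hh⟩)⟩ := h
      · exact ⟨rfl, Or.inl ⟨rfl, hv.symm⟩⟩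
      · refine ⟨rfl, Or.inr ⟨hk.symm, hh.1.symm, ?_, hh.2.2.1.symm, ?_⟩⟩
        · have := (P i).inv_mem hh.2.1; simpa [mul_inv_rev] using this
        · rw [SimpleGraph.dist_comm, ← hk]; exact hh.2.2.2
  loopless := by
    constructor
    rintro (a | ⟨i, a, k⟩) h
    · exact h.1 rfl
    · obtain ⟨-, (⟨-, hv⟩ | ⟨-, hh⟩)⟩ := h
      · omega
      · exact hh.1 rfl

variable (S : Set G) (P : ι → Subgroup G)

/-- The identity vertex `*` of the Groves–Manning space. -/
def idv : GMVert G ι := Sum.inl 1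

/-- The ball `B_r(c)` of radius `r` about `c`, in the edge-path metric of the
Groves–Manning space. -/
def gball (c : GMVert G ι) (r : ℕ) : Set (GMVert G ι) :=
  {v | (GMGraph S P).dist c v ≤ r}

/-- The horoball over the coset `t • (P i)`. -/
def horoball (i : ι) (t : G) : Set (GMVert G ι) :=
  fun v => match v with
  | .inl g => t⁻¹ * g ∈ P i
  | .inr (j, g, _) => j = i ∧ t⁻¹ * g ∈ P i

/-- `H(m)`: the vertices of the horoball at depth exactly `m`. -/
def horoSphere (i : ι) (t : G) (m : ℕ) : Set (GMVert G ι) :=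
  {v | v ∈ horoball P i t ∧ depth v = m}

/-- `H^m`: the `m`-horoball, all vertices of the horoball at depth at least `m`. -/
def horoDeep (i : ι) (t : G) (m : ℕ) : Set (GMVert G ι) :=
  {v | v ∈ horoball P i t ∧ m ≤ depth v}

/-- A walk is geodesic if its length realizes the graph distance of its endpoints. -/
def IsGeodesic {V : Type} (Γ : SimpleGraph V) {a b : V} (p : Γ.Walk a b) : Prop :=
  p.length = Γ.dist a b

/-- `Γ` is `δ`-hyperbolic: all geodesic triangles are `δ`-slim. -/
def SlimTriangles {V : Type} (Γ : SimpleGraph V) (δ : ℕ) : Prop :=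
  ∀ ⦃a b c : V⦄ (p : Γ.Walk a b) (q : Γ.Walk b c) (r : Γ.Walk a c),
    IsGeodesic Γ p → IsGeodesic Γ q → IsGeodesic Γ r →
    ∀ v ∈ r.support,
      (∃ w ∈ p.support, Γ.dist v w ≤ δ) ∨ (∃ w ∈ q.support, Γ.dist v w ≤ δ)

end GM

/-! Write `z` and `t` as the vertices over `x` and `y` at depth `d̄`, and let `R` be the distance
from `x` to `y` in the coset graph. Since `d̄ ≥ δ`, slim triangles keep every geodesic from `z`
to `t` inside the horoball, and a walk there that descends `a` levels and crosses with `c`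
horizontal edges has `R ≤ c * 2 ^ (d̄ + a)` and length at least `2 * a + c`. The V-shaped path
through the first level `d̄ + s` at which `h ≤ 3` horizontal edges suffice realises this minimum,
so `d(z, t) = 2 * s + h`. Its vertex `v` one horizontal step past the bottom of the descent from `z`
has depth `d̄ + s`, so minimality of `z` gives `d(*, v) ≥ d(*, z) + s`. Slimness of the triangle
`(*, z, t)` at `v` finishes: if `v` is `δ`-close to `[*, z]` then `2 * s + 1 ≤ 2 * δ`, so
`d(z, t) ≤ 2 * δ + 1`; if it is `δ`-close to `[*, t]` then
`d(v, t) ≤ 2 * δ + d(*, t) - d(*, z) - s`, and `d(z, v) = s + 1`. -/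

namespace SimpleGraph

variable {V : Type} {Γ : SimpleGraph V} {a b : V}

lemma Reachable.exists_dist_le_and_dist_le_sub (h : Γ.Reachable a b) (c : ℕ) :
    ∃ u, Γ.Reachable a u ∧ Γ.Reachable u b ∧ Γ.dist a u ≤ c ∧ Γ.dist u b ≤ Γ.dist a b - c := by
  obtain ⟨p, hp⟩ := h.exists_walk_length_eq_dist
  refine ⟨p.getVert c, (p.take c).reachable, (p.drop c).reachable, ?_, ?_⟩
  · exact (Γ.dist_le _).trans ((Walk.take_length p c).trans_le inf_le_left)
  · exact (Γ.dist_le _).trans (by rw [Walk.drop_length, hp])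

end SimpleGraph

namespace GM

section Geodesics

variable {V : Type} {Γ : SimpleGraph V} {a b v : V}

lemma IsGeodesic.dist_add_dist {p : Γ.Walk a b} (hp : IsGeodesic Γ p) (hv : v ∈ p.support) :
    Γ.dist a v + Γ.dist v b = Γ.dist a b := by
  classical
  have hlen : (p.takeUntil v hv).length + (p.dropUntil v hv).length = p.length := by
    rw [← Walk.length_append, p.take_spec hv]
  have h₁ := dist_le (p.takeUntil v hv)
  have h₂ := dist_le (p.dropUntil v hv)
  have h₃ := (p.takeUntil v hv).reachable.dist_triangle_left b
  have h₄ : p.length = Γ.dist a b := hp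
  omega

lemma exists_isGeodesic_mem_support (hav : Γ.Reachable a v) (hvb : Γ.Reachable v b)
    (h : Γ.dist a v + Γ.dist v b ≤ Γ.dist a b) :
    ∃ p : Γ.Walk a b, IsGeodesic Γ p ∧ v ∈ p.support := by
  obtain ⟨p, hp⟩ := hav.exists_walk_length_eq_dist
  obtain ⟨q, hq⟩ := hvb.exists_walk_length_eq_dist
  refine ⟨p.append q, le_antisymm ?_ (dist_le _), (p.mem_support_append_iff q).mpr
    (Or.inr q.start_mem_support)⟩
  rw [Walk.length_append, hp, hq]
  exact h

lemma SlimTriangles.exists_dist_le_of_mem_support {δ : ℕ} (hΓ : SlimTriangles Γ δ)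
    (hconn : Γ.Connected) {γ : Γ.Walk a b} (hγ : IsGeodesic Γ γ) (hv : v ∈ γ.support) (o : V) :
    ∃ w, Γ.dist v w ≤ δ ∧
      (Γ.dist o w + Γ.dist w a = Γ.dist o a ∨ Γ.dist o w + Γ.dist w b = Γ.dist o b) := by
  obtain ⟨p, hp⟩ := hconn.exists_walk_length_eq_dist o a
  obtain ⟨q, hq⟩ := hconn.exists_walk_length_eq_dist o b
  have hp' : IsGeodesic Γ p.reverse := by
    rw [IsGeodesic, Walk.length_reverse, hp, dist_comm]
  rcases hΓ p.reverse q γ hp' hq hγ v hv with ⟨w, hw, hvw⟩ | ⟨w, hw, hvw⟩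
  · rw [Walk.support_reverse, List.mem_reverse] at hw
    exact ⟨w, hvw, Or.inl ((show IsGeodesic Γ p from hp).dist_add_dist hw)⟩
  · exact ⟨w, hvw, Or.inr ((show IsGeodesic Γ q from hq).dist_add_dist hw)⟩

end Geodesics

section Vertices

variable {G ι : Type}

@[simp] lemma depth_atLevel (j : ι) (b : G) (k : ℕ) : depth (atLevel j b k : GMVert G ι) = k := by
  cases k <;> rfl

@[simp] lemma baseElt_atLevel (j : ι) (b : G) (k : ℕ) :
    baseElt (atLevel j b k : GMVert G ι) = b := by
  cases k <;> rfl

lemma inr_eq_atLevel (j : ι) (b : G) (k : ℕ+) :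
    (Sum.inr (j, b, k) : GMVert G ι) = atLevel j b k := by
  obtain ⟨_ | n, hk⟩ := k
  · omega
  · rfl

end Vertices

variable {G : Type} [Group G] {ι : Type}

lemma reachable_mul_of_mem_closure {V : Type} {Γ : SimpleGraph V} (f : G → V) {T : Set G}
    (hT : ∀ y, ∀ s ∈ T, Γ.Reachable (f y) (f (y * s))) {x : G} (hx : x ∈ Subgroup.closure T)
    (a : G) : Γ.Reachable (f a) (f (a * x)) := by
  induction hx using Subgroup.closure_induction_right with
  | one => rw [mul_one]
  | mul_right x _ s hs ih => exact ih.trans (by simpa [mul_assoc] using hT (a * x) s hs)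
  | mul_inv_cancel x _ s hs ih =>
    exact ih.trans (by simpa [mul_assoc] using (hT (a * (x * s⁻¹)) s hs).symm)

variable {S : Set G} {P : ι → Subgroup G} {i : ι}

lemma cosetGraph_reachable_mul (y : G) {s : G} (hs : s ∈ S ∩ P i) :
    (cosetGraph S P i).Reachable y (y * s) := by
  by_cases h : s = 1
  · simp [h]
  · exact Adj.reachable ⟨⟨by simpa using h, Or.inl (by simpa using hs.1)⟩,
      by simpa using hs.2⟩

lemma cosetGraph_reachable_of_inv_mul_mem (hPgen : Subgroup.closure (S ∩ (P i : Set G)) = P i)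
    {a b : G} (h : a⁻¹ * b ∈ P i) : (cosetGraph S P i).Reachable a b := by
  rw [← hPgen] at h
  simpa using reachable_mul_of_mem_closure id (fun y _ hs => cosetGraph_reachable_mul y hs) h a

lemma inv_mul_mem_of_cosetGraph_reachable {a b : G} (h : (cosetGraph S P i).Reachable a b) :
    a⁻¹ * b ∈ P i := by
  obtain ⟨p⟩ := h
  induction p with
  | nil => simp
  | cons hadj _ ih => simpa [mul_assoc] using (P i).mul_mem hadj.2 ih

lemma atLevel_mem_horoball {g b : G} (hb : g⁻¹ * b ∈ P i) (k : ℕ) :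
    atLevel i b k ∈ horoball P i g := by
  cases k with
  | zero => exact hb
  | succ n => exact ⟨rfl, hb⟩

lemma exists_eq_atLevel_of_mem_horoSphere {g : G} {m : ℕ} {v : GMVert G ι}
    (hv : v ∈ horoSphere P i g m) : ∃ b, g⁻¹ * b ∈ P i ∧ v = atLevel i b m := by
  obtain ⟨hH, rfl⟩ := hv
  rcases v with b | ⟨j, b, k⟩
  · exact ⟨b, hH, rfl⟩
  · obtain ⟨rfl, hb⟩ := hH
    exact ⟨b, hb, inr_eq_atLevel j b k⟩

lemma depth_le_depth_add_one_of_adj {u v : GMVert G ι} (h : (GMGraph S P).Adj u v) :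
    depth u ≤ depth v + 1 := by
  rcases u with a | ⟨j, a, k⟩ <;> rcases v with b | ⟨j', b, l⟩
  · simp [depth]
  · simp [depth]
  · simp [depth, h.2]
  · obtain ⟨-, ⟨-, hv⟩ | ⟨hk, -⟩⟩ := h <;> simp only [depth] <;> omega

lemma depth_le_depth_add_length {u v : GMVert G ι} (w : (GMGraph S P).Walk u v) :
    depth u ≤ depth v + w.length := by
  induction w with
  | nil => simp
  | cons h _ ih =>
    have := depth_le_depth_add_one_of_adj h
    rw [Walk.length_cons]
    omega

lemma depth_le_depth_add_dist {u v : GMVert G ι} (h : (GMGraph S P).Reachable u v) :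
    depth u ≤ depth v + (GMGraph S P).dist u v := by
  obtain ⟨w, hw⟩ := h.exists_walk_length_eq_dist
  exact hw ▸ depth_le_depth_add_length w

lemma mem_horoball_of_adj {g : G} {u v : GMVert G ι} (hu : u ∈ horoball P i g)
    (hd : depth u ≠ 0) (h : (GMGraph S P).Adj u v) : v ∈ horoball P i g := by
  rcases u with a | ⟨j, a, k⟩
  · exact absurd rfl hd
  obtain ⟨rfl, ha⟩ := hu
  rcases v with b | ⟨j', b, l⟩
  · obtain ⟨rfl, -⟩ := h
    exact ha
  · obtain ⟨rfl, ⟨rfl, -⟩ | ⟨-, hh⟩⟩ := h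
    · exact ⟨rfl, ha⟩
    · exact ⟨rfl, by simpa [mul_assoc] using (P j).mul_mem ha hh.2.1⟩

lemma depth_lt_length_of_mem_horoball {g : G} {u x : GMVert G ι} (w : (GMGraph S P).Walk u x)
    (hu : u ∈ horoball P i g) (hx : x ∉ horoball P i g) : depth u < w.length := by
  induction w with
  | nil => exact absurd hu hx
  | @cons u u' _ h p ih =>
    rw [Walk.length_cons]
    by_cases hu' : u' ∈ horoball P i g
    · have := depth_le_depth_add_one_of_adj h
      have := ih hu' hx
      omega
    · have : depth u = 0 := by
        by_contra hd
        exact hu' (mem_horoball_of_adj hu hd h)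
      omega

lemma depth_lt_dist_of_mem_horoball {g : G} {u x : GMVert G ι}
    (hre : (GMGraph S P).Reachable u x) (hu : u ∈ horoball P i g) (hx : x ∉ horoball P i g) :
    depth u < (GMGraph S P).dist u x := by
  obtain ⟨w, hw⟩ := hre.exists_walk_length_eq_dist
  exact hw ▸ depth_lt_length_of_mem_horoball w hu hx

lemma adj_atLevel_succ (j : ι) (b : G) (k : ℕ) :
    (GMGraph S P).Adj (atLevel j b k) (atLevel j b (k + 1)) := by
  cases k with
  | zero => exact ⟨rfl, rfl⟩
  | succ n => exact ⟨rfl, Or.inl ⟨rfl, Or.inl rfl⟩⟩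

lemma reachable_atLevel_add (j : ι) (b : G) (k n : ℕ) :
    (GMGraph S P).Reachable (atLevel j b k) (atLevel j b (k + n)) := by
  induction n with
  | zero => rfl
  | succ n ih => exact ih.trans (adj_atLevel_succ j b (k + n)).reachable

lemma dist_atLevel_add_le (j : ι) (b : G) (k n : ℕ) :
    (GMGraph S P).dist (atLevel j b k) (atLevel j b (k + n)) ≤ n := by
  induction n with
  | zero => simp
  | succ n ih =>
    have hadj : (GMGraph S P).Adj (atLevel j b (k + n)) (atLevel j b (k + (n + 1))) :=
      adj_atLevel_succ j b (k + n)
    calc _ ≤ (GMGraph S P).dist (atLevel j b k) (atLevel j b (k + n)) +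
          (GMGraph S P).dist (atLevel j b (k + n)) (atLevel j b (k + (n + 1))) :=
          hadj.reachable.dist_triangle_right _
      _ ≤ n + 1 := by rw [dist_eq_one_iff_adj.mpr hadj]; omega

lemma connected_GMGraph (hSgen : Subgroup.closure S = ⊤) : (GMGraph S P).Connected := by
  have hstep : ∀ y, ∀ s ∈ S,
      (GMGraph S P).Reachable (Sum.inl y : GMVert G ι) (Sum.inl (y * s)) := by
    intro y s hs
    by_cases h : s = 1
    · rw [h, mul_one]
      exact .rfl
    · exact Adj.reachable (show cayleyAdj S y (y * s) from
        ⟨by simpa using h, Or.inl (by simpa using hs)⟩)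
  have hbase : ∀ x : G, (GMGraph S P).Reachable (Sum.inl 1 : GMVert G ι) (Sum.inl x) := fun x => by
    simpa using reachable_mul_of_mem_closure _ hstep (hSgen ▸ Subgroup.mem_top x) 1
  have hvert : ∀ v : GMVert G ι, (GMGraph S P).Reachable (Sum.inl (baseElt v)) v
    | .inl _ => .rfl
    | .inr (j, b, k) => by
      rw [inr_eq_atLevel, baseElt_atLevel]
      have h0 := reachable_atLevel_add (S := S) (P := P) j b 0 k
      rw [zero_add] at h0
      exact h0
  have : Nonempty (GMVert G ι) := ⟨Sum.inl 1⟩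
  exact ⟨fun u v => ((hbase _).trans (hvert u)).symm.trans ((hbase _).trans (hvert v))⟩

lemma adj_atLevel_of_cosetGraph_dist_le {j : ι} {m : ℕ} (hm : 1 ≤ m) {x y : G} (hxy : x ≠ y)
    (hre : (cosetGraph S P j).Reachable x y) (hd : (cosetGraph S P j).dist x y ≤ 2 ^ m) :
    (GMGraph S P).Adj (atLevel j x m) (atLevel j y m) := by
  obtain ⟨m, rfl⟩ : ∃ m', m = m' + 1 := ⟨m - 1, by omega⟩
  exact ⟨rfl, Or.inr ⟨rfl, hxy, inv_mul_mem_of_cosetGraph_reachable hre, hre, hd⟩⟩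

lemma dist_atLevel_le_of_cosetGraph_dist_le {j : ι} {m : ℕ} (hm : 1 ≤ m) (n : ℕ) {x y : G}
    (hre : (cosetGraph S P j).Reachable x y) (hd : (cosetGraph S P j).dist x y ≤ n * 2 ^ m) :
    (GMGraph S P).dist (atLevel j x m) (atLevel j y m) ≤ n := by
  induction n generalizing x with
  | zero =>
    obtain rfl : x = y := hre.dist_eq_zero_iff.mp (by simpa using hd)
    simp
  | succ n ih =>
    obtain ⟨u, hxu, huy, hd₁, hd₂⟩ := hre.exists_dist_le_and_dist_le_sub (2 ^ m)
    have hrest := ih huy (by rw [add_one_mul] at hd; omega)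
    by_cases heq : x = u
    · subst heq
      omega
    · have hadj := adj_atLevel_of_cosetGraph_dist_le hm heq hxu hd₁
      have := hadj.reachable.dist_triangle_left (atLevel j y m)
      rw [dist_eq_one_iff_adj.mpr hadj] at this
      omega

lemma dist_atLevel_le_succ {j : ι} {x y : G} {d n : ℕ} (hm : 1 ≤ d + n)
    (hre : (cosetGraph S P j).Reachable x y) (hd : (cosetGraph S P j).dist x y ≤ 2 ^ (d + n)) :
    (GMGraph S P).dist (atLevel j x d) (atLevel j y (d + n)) ≤ n + 1 := by
  have hdown := dist_atLevel_add_le (S := S) (P := P) j x d n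
  have hacross := dist_atLevel_le_of_cosetGraph_dist_le hm 1 hre (by simpa using hd)
  have := (reachable_atLevel_add (S := S) (P := P) j x d n).dist_triangle_left
    (atLevel j y (d + n))
  omega

lemma exists_atLevel_dist_le {g x y : G} {d s h : ℕ} (hm : 1 ≤ d + s) (hx : g⁻¹ * x ∈ P i)
    (hre : (cosetGraph S P i).Reachable x y)
    (hh : (cosetGraph S P i).dist x y ≤ h * 2 ^ (d + s)) :
    ∃ u, atLevel i u (d + s) ∈ horoball P i g ∧
      (GMGraph S P).dist (atLevel i x d) (atLevel i u (d + s)) ≤ s + 1 ∧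
      (GMGraph S P).dist (atLevel i u (d + s)) (atLevel i y d) ≤ (h - 1) + s := by
  obtain ⟨u, hxu, huy, hd₁, hd₂⟩ := hre.exists_dist_le_and_dist_le_sub (2 ^ (d + s))
  refine ⟨u, atLevel_mem_horoball ?_ _, ?_, ?_⟩
  · simpa [mul_assoc] using (P i).mul_mem hx (inv_mul_mem_of_cosetGraph_reachable hxu)
  · exact dist_atLevel_le_succ hm hxu hd₁
  · have hacross := dist_atLevel_le_of_cosetGraph_dist_le hm (h - 1) huy
      (by rw [Nat.sub_one_mul]; omega)
    have hup : (GMGraph S P).dist (atLevel i y (d + s)) (atLevel i y d) ≤ s := by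
      rw [SimpleGraph.dist_comm]; exact dist_atLevel_add_le i y d s
    have := (reachable_atLevel_add (S := S) (P := P) i y d s).symm.dist_triangle_right
      (atLevel i u (d + s))
    omega

lemma baseElt_eq_or_of_adj {g : G} {u v : GMVert G ι} (hu : u ∈ horoball P i g)
    (hv : v ∈ horoball P i g) (h : (GMGraph S P).Adj u v) :
    baseElt u = baseElt v ∨
      (depth u = depth v ∧ (cosetGraph S P i).Reachable (baseElt u) (baseElt v) ∧
        (cosetGraph S P i).dist (baseElt u) (baseElt v) ≤ 2 ^ depth u) := by
  rcases u with a | ⟨j, a, k⟩ <;> rcases v with b | ⟨j', b, l⟩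
  · have hadj : (cosetGraph S P i).Adj a b :=
      ⟨h, by simpa [mul_assoc] using (P i).mul_mem ((P i).inv_mem hu) hv⟩
    exact Or.inr ⟨rfl, hadj.reachable,
      by simpa [depth, baseElt] using (dist_eq_one_iff_adj.mpr hadj).le⟩
  · exact Or.inl h.1
  · exact Or.inl h.1
  · obtain ⟨rfl, -⟩ := hu
    obtain ⟨rfl, ⟨rfl, -⟩ | ⟨hkl, hh⟩⟩ := h
    · exact Or.inl rfl
    · exact Or.inr ⟨hkl, hh.2.2.1, hh.2.2.2⟩

/-- `c` bounds the number of horizontal edges, each of which moves the base at most `2 ^ m`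
along the coset. -/
lemma exists_cosetGraph_dist_le_of_walk {g : G} {a b : GMVert G ι} (w : (GMGraph S P).Walk a b)
    (hw : ∀ x ∈ w.support, x ∈ horoball P i g) :
    ∃ m c, depth a ≤ m ∧ depth b ≤ m ∧ (m - depth a) + (m - depth b) + c ≤ w.length ∧
      (cosetGraph S P i).Reachable (baseElt a) (baseElt b) ∧
      (cosetGraph S P i).dist (baseElt a) (baseElt b) ≤ c * 2 ^ m := by
  induction w with
  | nil => exact ⟨_, 0, le_rfl, le_rfl, by simp, .refl _, by simp⟩
  | @cons a a' b hadj p ih =>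
    have ha : a ∈ horoball P i g := hw a (Walk.start_mem_support _)
    have ha' : a' ∈ horoball P i g := hw a' (by simp)
    obtain ⟨m, c, h₁, h₂, hlen, hre, hd⟩ := ih fun x hx => hw x (by simp [hx])
    have hdep := depth_le_depth_add_one_of_adj hadj
    rw [Walk.length_cons]
    rcases baseElt_eq_or_of_adj ha ha' hadj with hbase | ⟨hdeq, hre₀, hd₀⟩
    · rw [hbase]
      rcases le_or_gt (depth a) m with hle | hlt
      · have := depth_le_depth_add_one_of_adj hadj.symm
        exact ⟨m, c, hle, h₂, by omega, hre, hd⟩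
      · refine ⟨m + 1, c, by omega, by omega, by omega, hre, hd.trans ?_⟩
        exact Nat.mul_le_mul_left _ (Nat.pow_le_pow_right (by norm_num) (by omega))
    · refine ⟨m, c + 1, by omega, h₂, by omega, hre₀.trans hre, ?_⟩
      calc _ ≤ (cosetGraph S P i).dist (baseElt a) (baseElt a') +
            (cosetGraph S P i).dist (baseElt a') (baseElt b) := hre₀.dist_triangle_left _
        _ ≤ 2 ^ m + c * 2 ^ m :=
          add_le_add (hd₀.trans (Nat.pow_le_pow_right (by norm_num) (by omega))) hd
        _ = (c + 1) * 2 ^ m := by ring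

lemma exists_two_mul_add_le_length {g x y : G} {d : ℕ}
    (w : (GMGraph S P).Walk (atLevel i x d) (atLevel i y d))
    (hw : ∀ v ∈ w.support, v ∈ horoball P i g) :
    ∃ a c, (cosetGraph S P i).dist x y ≤ c * 2 ^ (d + a) ∧ 2 * a + c ≤ w.length := by
  obtain ⟨m, c, hm, -, hlen, -, hd⟩ := exists_cosetGraph_dist_le_of_walk w hw
  simp only [depth_atLevel, baseElt_atLevel] at hm hlen hd
  refine ⟨m - d, c, by rwa [Nat.add_sub_cancel' hm], by omega⟩

/-- Descending `a` levels and crossing with `c` horizontal edges costs `2 * a + c`. The cost is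
least at the first level where three horizontal edges suffice: above it each further descent
saves at least two horizontal edges, below it at most two are left to save. -/
lemma exists_optimal_level (d R : ℕ) :
    ∃ s h, h ≤ 3 ∧ R ≤ h * 2 ^ (d + s) ∧
      ∀ a c, R ≤ c * 2 ^ (d + a) → 2 * s + h ≤ 2 * a + c := by
  classical
  have hex : ∃ s, R ≤ 3 * 2 ^ (d + s) := ⟨R, by
    have h₁ : R < 2 ^ R := Nat.lt_two_pow_self
    have h₂ : 2 ^ R ≤ 2 ^ (d + R) := Nat.pow_le_pow_right (by norm_num) (by omega)
    omega⟩
  set s := Nat.find hex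
  have hexc : ∃ c, R ≤ c * 2 ^ (d + s) := ⟨3, Nat.find_spec hex⟩
  set h := Nat.find hexc
  have hge : ∀ a c, s ≤ a → R ≤ c * 2 ^ (d + a) → 2 * s + h ≤ 2 * a + c := by
    intro a c hsa hc
    rcases hsa.eq_or_lt with rfl | hlt
    · have := Nat.find_min' hexc hc
      omega
    · rcases Nat.eq_zero_or_pos c with rfl | hc₀
      · have : h = 0 := Nat.le_zero.mp (Nat.find_min' hexc (by simpa using hc))
        omega
      · have := Nat.find_min' hexc (Nat.find_spec hex)
        omega
  have hle : ∀ k a c, a + k = s → R ≤ c * 2 ^ (d + a) → 2 * s + h ≤ 2 * a + c := by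
    intro k
    induction k with
    | zero => exact fun a c hk hc => hge a c (by omega) hc
    | succ k ih =>
      intro a c hk hc
      have hbig : ¬R ≤ 3 * 2 ^ (d + a) := Nat.find_min hex (by omega)
      have hc₄ : 4 ≤ c := by
        by_contra
        exact hbig (hc.trans (Nat.mul_le_mul_right _ (by omega)))
      have hpow : (c - 2) * 2 ^ (d + (a + 1)) = (c - 2) * 2 * 2 ^ (d + a) := by
        rw [← add_assoc, pow_succ]
        ring
      have := ih (a + 1) (c - 2) (by omega)
        (hpow ▸ hc.trans (Nat.mul_le_mul_right _ (by omega)))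
      omega
  refine ⟨s, h, Nat.find_min' hexc (Nat.find_spec hex), Nat.find_spec hexc, fun a c hc => ?_⟩
  rcases le_or_gt s a with hsa | has
  · exact hge a c hsa hc
  · exact hle (s - a) a c (by omega) hc

lemma mem_horoDeep_of_isGeodesic {g : G} {k : ℕ} {u u' x : GMVert G ι}
    (hu : u ∈ horoball P i g) (hu' : u' ∈ horoball P i g) {p : (GMGraph S P).Walk u u'}
    (hp : IsGeodesic (GMGraph S P) p) (hlen : p.length + 2 * k ≤ depth u + depth u' + 1)
    (hx : x ∈ p.support) : x ∈ horoDeep P i g k := by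
  classical
  have hsplit := hp.dist_add_dist hx
  have hL : p.length = (GMGraph S P).dist u u' := hp
  have hre : (GMGraph S P).Reachable u x := (p.takeUntil x hx).reachable
  have hre' : (GMGraph S P).Reachable u' x := (p.dropUntil x hx).reachable.symm
  have hcomm := (GMGraph S P).dist_comm (u := x) (v := u')
  refine ⟨?_, ?_⟩
  · by_contra hxH
    have h₁ := depth_lt_dist_of_mem_horoball hre hu hxH
    have h₂ := depth_lt_dist_of_mem_horoball hre' hu' hxH
    omega
  · have h₁ := depth_le_depth_add_dist hre
    have h₂ := depth_le_depth_add_dist hre'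
    omega

/-- The other two sides of the triangle through the vertex over `y` at depth `d + R + 1` lie in
`H^d`, so each vertex of `γ` is within `δ ≤ d` of `H^d`. -/
lemma mem_horoball_of_isGeodesic (hconn : (GMGraph S P).Connected)
    (hPgen : Subgroup.closure (S ∩ (P i : Set G)) = P i) {δ d : ℕ}
    (hhyp : SlimTriangles (GMGraph S P) δ) (hδd : δ ≤ d) {g x y : G} (hx : g⁻¹ * x ∈ P i)
    (hy : g⁻¹ * y ∈ P i) {γ : (GMGraph S P).Walk (atLevel i x d) (atLevel i y d)}
    (hγ : IsGeodesic (GMGraph S P) γ) {v : GMVert G ι} (hv : v ∈ γ.support) :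
    v ∈ horoball P i g := by
  set R := (cosetGraph S P i).dist x y
  have hre : (cosetGraph S P i).Reachable x y := cosetGraph_reachable_of_inv_mul_mem hPgen
    (by simpa [mul_assoc] using (P i).mul_mem ((P i).inv_mem hx) hy)
  have hzt' : (GMGraph S P).dist (atLevel i x d) (atLevel i y (d + (R + 1))) ≤ R + 2 := by
    refine dist_atLevel_le_succ (by omega) hre ?_
    have h₁ : R < 2 ^ R := Nat.lt_two_pow_self
    have h₂ : 2 ^ R ≤ 2 ^ (d + (R + 1)) := Nat.pow_le_pow_right (by norm_num) (by omega)
    omega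
  obtain ⟨η, hη⟩ := hconn.exists_walk_length_eq_dist (atLevel i x d) (atLevel i y (d + (R + 1)))
  obtain ⟨q, hq⟩ := hconn.exists_walk_length_eq_dist (atLevel i y (d + (R + 1))) (atLevel i y d)
  have hqlen : q.length ≤ R + 1 := by
    rw [hq, SimpleGraph.dist_comm]
    exact dist_atLevel_add_le i y d (R + 1)
  have hdeep : ∀ w, (w ∈ η.support ∨ w ∈ q.support) → w ∈ horoDeep P i g d := by
    rintro w (hw | hw)
    · exact mem_horoDeep_of_isGeodesic (atLevel_mem_horoball hx d) (atLevel_mem_horoball hy _)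
        hη (by simp only [depth_atLevel]; omega) hw
    · exact mem_horoDeep_of_isGeodesic (atLevel_mem_horoball hy _) (atLevel_mem_horoball hy d)
        hq (by simp only [depth_atLevel]; omega) hw
  obtain ⟨w, hw, hvw⟩ : ∃ w, (w ∈ η.support ∨ w ∈ q.support) ∧ (GMGraph S P).dist v w ≤ δ := by
    rcases hhyp η q γ hη hq hγ v hv with ⟨w, hw, hvw⟩ | ⟨w, hw, hvw⟩
    · exact ⟨w, Or.inl hw, hvw⟩
    · exact ⟨w, Or.inr hw, hvw⟩
  obtain ⟨hwH, hwd⟩ := hdeep w hw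
  by_contra hvH
  have := depth_lt_dist_of_mem_horoball (hconn w v) hwH hvH
  rw [SimpleGraph.dist_comm] at this
  omega

lemma le_dist_atLevel (hconn : (GMGraph S P).Connected)
    (hPgen : Subgroup.closure (S ∩ (P i : Set G)) = P i) {δ d : ℕ}
    (hhyp : SlimTriangles (GMGraph S P) δ) (hδd : δ ≤ d) {g x y : G} (hx : g⁻¹ * x ∈ P i)
    (hy : g⁻¹ * y ∈ P i) {n : ℕ}
    (hn : ∀ a c, (cosetGraph S P i).dist x y ≤ c * 2 ^ (d + a) → n ≤ 2 * a + c) :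
    n ≤ (GMGraph S P).dist (atLevel i x d) (atLevel i y d) := by
  obtain ⟨γ, hγ⟩ := hconn.exists_walk_length_eq_dist (atLevel i x d) (atLevel i y d)
  obtain ⟨a, c, hc, hlen⟩ := exists_two_mul_add_le_length γ
    fun v hv => mem_horoball_of_isGeodesic hconn hPgen hhyp hδd hx hy hγ hv
  have := hn a c hc
  omega

lemma exists_walk_to_horoSphere {g : G} {m : ℕ} {a v : GMVert G ι} (w : (GMGraph S P).Walk a v)
    (hv : v ∈ horoDeep P i g m) (ha : a ∉ horoDeep P i g m) :
    ∃ u ∈ horoSphere P i g m, ∃ q : (GMGraph S P).Walk a u,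
      q.length + (depth v - m) ≤ w.length := by
  induction w with
  | nil => exact absurd hv ha
  | @cons a a' v hadj p ih =>
    by_cases ha' : a' ∈ horoDeep P i g m
    · have hda' : depth a' = m := by
        have := depth_le_depth_add_one_of_adj hadj.symm
        by_contra hne
        have := ha'.2
        exact ha ⟨mem_horoball_of_adj ha'.1 (by omega) hadj.symm, by omega⟩
      have := depth_le_depth_add_length p.reverse
      refine ⟨a', ⟨ha'.1, hda'⟩, .cons hadj .nil, ?_⟩
      simp only [Walk.length_cons, Walk.length_nil, Walk.length_reverse] at this ⊢
      omega
    · obtain ⟨u, hu, q, hq⟩ := ih hv ha'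
      exact ⟨u, hu, .cons hadj q, by rw [Walk.length_cons, Walk.length_cons]; omega⟩

lemma idv_not_mem_horoDeep {g : G} {m : ℕ} (hm : 1 ≤ m) :
    (idv : GMVert G ι) ∉ horoDeep P i g m := fun h => by
  have : m ≤ 0 := h.2
  omega

lemma dist_add_le_of_forall_dist_le {g : G} {m : ℕ} {o z v : GMVert G ι}
    (hzmin : ∀ w ∈ horoSphere P i g m, (GMGraph S P).dist o z ≤ (GMGraph S P).dist o w)
    (ho : o ∉ horoDeep P i g m) (hv : v ∈ horoDeep P i g m) (hre : (GMGraph S P).Reachable o v) :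
    (GMGraph S P).dist o z + (depth v - m) ≤ (GMGraph S P).dist o v := by
  obtain ⟨w, hw⟩ := hre.exists_walk_length_eq_dist
  obtain ⟨u, hu, q, hq⟩ := exists_walk_to_horoSphere w hv ho
  have := hzmin u hu
  have := dist_le q
  omega

theorem dist_atLevel_le_of_forall_dist_le (hSgen : Subgroup.closure S = ⊤)
    (hPgen : Subgroup.closure (S ∩ (P i : Set G)) = P i) {δ d : ℕ}
    (hhyp : SlimTriangles (GMGraph S P) δ) (hδd : δ ≤ d) (hd : 1 ≤ d) {g x y : G}
    (hx : g⁻¹ * x ∈ P i) (hy : g⁻¹ * y ∈ P i)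
    (hmin : ∀ w ∈ horoSphere P i g d,
      (GMGraph S P).dist idv (atLevel i x d) ≤ (GMGraph S P).dist idv w) :
    (GMGraph S P).dist (atLevel i x d) (atLevel i y d) ≤
      2 * δ + 1 + ((GMGraph S P).dist idv (atLevel i y d) -
        (GMGraph S P).dist idv (atLevel i x d)) := by
  rcases eq_or_ne x y with rfl | hxy
  · simp
  have hconn := connected_GMGraph (P := P) hSgen
  have hre : (cosetGraph S P i).Reachable x y := cosetGraph_reachable_of_inv_mul_mem hPgen
    (by simpa [mul_assoc] using (P i).mul_mem ((P i).inv_mem hx) hy)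
  obtain ⟨s, h, hh, hcover, hopt⟩ := exists_optimal_level d ((cosetGraph S P i).dist x y)
  have hh₁ : h ≠ 0 := by
    rintro rfl
    exact (hre.pos_dist_of_ne hxy).ne' (by simpa using hcover)
  have hlow := le_dist_atLevel hconn hPgen hhyp hδd hx hy hopt
  obtain ⟨u, huH, hzv, hvt⟩ := exists_atLevel_dist_le (by omega) hx hre hcover
  set Γ := GMGraph S P
  set z := atLevel i x d
  set t := atLevel i y d
  set v := atLevel i u (d + s)
  have hzt := hconn.dist_triangle (u := z) (v := v) (w := t)
  obtain ⟨γ, hγ, hvγ⟩ := exists_isGeodesic_mem_support (hconn z v) (hconn v t) (by omega)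
  have hfar : Γ.dist idv z + s ≤ Γ.dist idv v := by
    have := dist_add_le_of_forall_dist_le hmin (idv_not_mem_horoDeep hd) ⟨huH, by simp [v]⟩
      (hconn idv v)
    simpa [v] using this
  obtain ⟨w, hvw, hw | hw⟩ := hhyp.exists_dist_le_of_mem_support hconn hγ hvγ idv
  · have := hconn.dist_triangle (u := idv) (v := w) (w := v)
    have := hconn.dist_triangle (u := z) (v := w) (w := v)
    have := Γ.dist_comm (u := w) (v := v)
    have := Γ.dist_comm (u := w) (v := z)
    omega
  · have := hconn.dist_triangle (u := idv) (v := w) (w := v)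
    have := hconn.dist_triangle (u := v) (v := w) (w := t)
    have := Γ.dist_comm (u := w) (v := v)
    omega

end GM

open GM in
theorem statement_10_general {G : Type} [Group G] {ι : Type}
    (S : Finset G) (P : ι → Subgroup G)
    (hSgen : Subgroup.closure (S : Set G) = ⊤)
    (hPgen : ∀ i, Subgroup.closure ((S : Set G) ∩ (P i : Set G)) = P i)
    (δ : ℕ) (hδ : 1 ≤ δ) (hhyp : SlimTriangles (GMGraph (S : Set G) P) δ)
    (i : ι) (g : G) (dbar : ℕ) (hd : δ ≤ dbar) (r : ℕ)
    (z : GMVert G ι) (hz : z ∈ horoSphere P i g dbar)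
    (hzmin : ∀ w ∈ horoSphere P i g dbar,
      (GMGraph (S : Set G) P).dist idv z ≤ (GMGraph (S : Set G) P).dist idv w) :
    (∀ t ∈ horoSphere P i g dbar, t ∈ gball (S : Set G) P idv r →
      (GMGraph (S : Set G) P).dist z t ≤
        2 * δ + 1 + (r - (GMGraph (S : Set G) P).dist idv z)) ∧
    gball (S : Set G) P idv r ∩ horoSphere P i g dbar ⊆
      gball (S : Set G) P z (2 * δ + 1 + (r - (GMGraph (S : Set G) P).dist idv z)) ∩
        horoSphere P i g dbar := by
  obtain ⟨x, hx, rfl⟩ := exists_eq_atLevel_of_mem_horoSphere hz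
  have key : ∀ t ∈ horoSphere P i g dbar, t ∈ gball (S : Set G) P idv r →
      (GMGraph (S : Set G) P).dist (atLevel i x dbar) t ≤
        2 * δ + 1 + (r - (GMGraph (S : Set G) P).dist idv (atLevel i x dbar)) := by
    intro t ht htr
    obtain ⟨y, hy, rfl⟩ := exists_eq_atLevel_of_mem_horoSphere ht
    have := dist_atLevel_le_of_forall_dist_le hSgen (hPgen i) hhyp hd (hδ.trans hd) hx hy hzmin
    have htr' : (GMGraph (S : Set G) P).dist idv (atLevel i y dbar) ≤ r := htr
    omega
  exact ⟨key, fun t ⟨htr, ht⟩ => ⟨key t ht htr, ht⟩⟩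

open GM in
/-- Suppose `t` is a vertex of `H(dbar)` for a horoball `H` of the
Groves–Manning space `X` with `dbar ≥ δ`, `z` is a closest point of `H(dbar)` to `*`, and
`t ∈ B_r(*)`.  Then `d(z,t) ≤ 2δ + 1 + (r − d(*,z))`; that is,
`B_r(*) ∩ H(dbar) ⊆ B_{2δ+1+k}(z) ∩ H(dbar)` where `k = r − d(*,z)`. -/
theorem statement_10 {G : Type} [Group G] {ι : Type} [Fintype ι]
    (S : Finset G) (P : ι → Subgroup G)
    (hSgen : Subgroup.closure (S : Set G) = ⊤)
    (hPgen : ∀ i, Subgroup.closure ((S : Set G) ∩ (P i : Set G)) = P i)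
    (hProper : ∀ i, P i ≠ ⊤)
    (δ : ℕ) (hδ : 1 ≤ δ) (hhyp : SlimTriangles (GMGraph (S : Set G) P) δ)
    (i : ι) (g : G) (dbar : ℕ) (hd : δ ≤ dbar) (r : ℕ)
    (z : GMVert G ι) (hz : z ∈ horoSphere P i g dbar)
    (hzmin : ∀ w ∈ horoSphere P i g dbar,
      (GMGraph (S : Set G) P).dist idv z ≤ (GMGraph (S : Set G) P).dist idv w) :
    (∀ t ∈ horoSphere P i g dbar, t ∈ gball (S : Set G) P idv r →
      (GMGraph (S : Set G) P).dist z t ≤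
        2 * δ + 1 + (r - (GMGraph (S : Set G) P).dist idv z)) ∧
    gball (S : Set G) P idv r ∩ horoSphere P i g dbar ⊆
      gball (S : Set G) P z (2 * δ + 1 + (r - (GMGraph (S : Set G) P).dist idv z)) ∩
        horoSphere P i g dbar :=
  statement_10_general S P hSgen hPgen δ hδ hhyp i g dbar hd r z hz hzmin
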